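/- arXiv:1111.5966 — 6 statements merged into one kernel-verified Lean document; each statement's English description precedes it below -/
import Mathlib

section
/- Let Γ ⊂ ℝ^ℤ be a nonempty collection of sequences that is totally ordered under the pointwise partial order and invariant under all shift maps τ_{k,l}. Then there exists a single ω ∈ ℝ such that every x ∈ Γ has rotation number ω, and moreover every x ∈ Γ satisfies |x_i − x_0 − ω·i| ≤ 1 for all i ∈ ℤ. -/
open Filter Topology

/-- The shift map `τ_{k,l}`: `(τ_{k,l} x) i = x (i - k) + l`. -/
def tau (k l : ℤ) (x : ℤ → ℝ) : ℤ → ℝ := fun i => x (i - k) + (l : ℝ)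

/-- A sequence is Birkhoff (well-ordered) if its integer translates are totally ordered
in the pointwise partial order. -/
def Birkhoff (x : ℤ → ℝ) : Prop :=
  ∀ k l k' l' : ℤ, tau k l x ≤ tau k' l' x ∨ tau k' l' x ≤ tau k l x

/-- `x` has rotation number `ω` if `x n / n → ω` as `n → ±∞`. -/
def HasRotNum (x : ℤ → ℝ) (ω : ℝ) : Prop :=
  Tendsto (fun n : ℤ => x n / (n : ℝ)) atTop (𝓝 ω) ∧
  Tendsto (fun n : ℤ => x n / (n : ℝ)) atBot (𝓝 ω)

/-- A Birkhoff sequence of rotation number `ω` is maximally periodic if `τ_{k,l} x = x`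
whenever `-ω k + l = 0`. -/
def MaxPeriodic (ω : ℝ) (x : ℤ → ℝ) : Prop :=
  ∀ k l : ℤ, -ω * (k : ℝ) + (l : ℝ) = 0 → tau k l x = x

/-- Partial derivative of a function on sequence space with respect to coordinate `i`. -/
noncomputable def pd (F : (ℤ → ℝ) → ℝ) (i : ℤ) : (ℤ → ℝ) → ℝ :=
  fun x => deriv (fun t => F (Function.update x i t)) (x i)

/-- Iterated partial derivatives along a list of coordinates. -/
noncomputable def pdList (F : (ℤ → ℝ) → ℝ) : List ℤ → (ℤ → ℝ) → ℝ
  | [] => F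
  | i :: L => pd (pdList F L) i

/-- `F` and `G` are `ε`-close in the `C^k` norm: all iterated partial derivatives of order
`≤ k` of the difference are bounded by `ε`. -/
def CkClose (k : ℕ) (ε : ℝ) (F G : (ℤ → ℝ) → ℝ) : Prop :=
  ∀ L : List ℤ, L.length ≤ k → ∀ x : ℤ → ℝ, |pdList (fun y => F y - G y) L x| ≤ ε

/-- Conditions A-E on a family of local potentials `S j : ℝ^ℤ → ℝ`, with range `r` and
uniform derivative bound `C`. -/
structure SatisfiesAE (r : ℕ) (C : ℝ) (S : ℤ → (ℤ → ℝ) → ℝ) : Prop where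
  r_pos : 1 ≤ r
  C_pos : 0 < C
  /- A: finite range -/
  finRange : ∀ j : ℤ, ∀ x y : ℤ → ℝ, (∀ i : ℤ, |i - j| ≤ (r : ℤ) → x i = y i) → S j x = S j y
  /- A: C² smoothness -/
  contS : ∀ j : ℤ, Continuous (S j)
  diff1 : ∀ j i : ℤ, ∀ x : ℤ → ℝ, DifferentiableAt ℝ (fun t => S j (Function.update x i t)) (x i)
  diff2 : ∀ j i k : ℤ, ∀ x : ℤ → ℝ,
    DifferentiableAt ℝ (fun t => pd (S j) i (Function.update x k t)) (x k)
  cont1 : ∀ j i : ℤ, Continuous (pd (S j) i)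
  cont2 : ∀ j i k : ℤ, Continuous (pd (pd (S j) i) k)
  /- B: shift invariance -/
  shiftInv : ∀ j k l : ℤ, ∀ x : ℤ → ℝ, S j x = S (j + k) (tau k l x)
  /- C: coercivity -/
  coercive : ∀ j k : ℤ, |k - j| = 1 → ∀ M : ℝ, ∃ R : ℝ, ∀ x : ℤ → ℝ, R ≤ |x k - x j| → M ≤ S j x
  /- D: monotonicity -/
  mono : ∀ j i k : ℤ, i ≠ k → ∀ x : ℤ → ℝ, pd (pd (S j) i) k x ≤ 0
  monoStrict : ∀ j k : ℤ, |j - k| = 1 → ∀ x : ℤ → ℝ, pd (pd (S j) j) k x < 0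
  /- E: bounded derivatives -/
  bdd1 : ∀ j i : ℤ, ∀ x : ℤ → ℝ, |pd (S j) i x| ≤ C
  bdd2 : ∀ j i k : ℤ, ∀ x : ℤ → ℝ, |pd (pd (S j) i) k x| ≤ C

/-- The periodic action `W_p(x) = ∑_{j=1}^p S_j(x)`. -/
noncomputable def Wper (S : ℤ → (ℤ → ℝ) → ℝ) (p : ℕ) (x : ℤ → ℝ) : ℝ :=
  ∑ j ∈ Finset.Icc (1 : ℤ) (p : ℤ), S j x

/-- A `(p,q)`-periodic minimizer: `τ_{p,q} x = x` and `x` minimizes `W_p` over `X_{p,q}`. -/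
def PerMin (S : ℤ → (ℤ → ℝ) → ℝ) (p : ℕ) (q : ℤ) (x : ℤ → ℝ) : Prop :=
  tau (p : ℤ) q x = x ∧ ∀ y : ℤ → ℝ, tau (p : ℤ) q y = y → Wper S p x ≤ Wper S p y

/-- The (formally convergent, by finite range) energy difference `W(x+y) - W(x)`. -/
noncomputable def Wdiff (S : ℤ → (ℤ → ℝ) → ℝ) (x y : ℤ → ℝ) : ℝ :=
  ∑' j : ℤ, (S j (fun i => x i + y i) - S j x)

/-- `x` is a global minimizer: every finite-support variation does not decrease the energy. -/
def GlobalMin (S : ℤ → (ℤ → ℝ) → ℝ) (x : ℤ → ℝ) : Prop :=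
  ∀ y : ℤ → ℝ, (Function.support y).Finite → 0 ≤ Wdiff S x y

/-- The extended orbit `Σ_y = { y k + l : k, l ∈ ℤ }`. -/
def extOrbit (y : ℤ → ℝ) : Set ℝ := {ξ : ℝ | ∃ k l : ℤ, ξ = y k + (l : ℝ)}

/-!
Comparing `x ∈ Γ` with its translates `τ_{-k,-l} x` for all integers `l` shows that the
increments `x (i + k) - x i`, `i ∈ ℤ`, never straddle an integer, so they all lie within `1` of
`x k - x 0`: the map `i ↦ x i - x 0` is a quasimorphism `ℤ → ℝ` of defect `1`. Its
homogenization `ω` satisfies `|x i - x 0 - ω i| ≤ 1`, which in turn gives the rotation number.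
Comparing `x` with the vertical translates `τ_{0,l} y` of another `y ∈ Γ` in the same way shows
that `x - y` is bounded, so `x` and `y` have the same `ω`.
-/

theorem eq_zero_of_forall_abs_mul_natCast_le {a C : ℝ} (h : ∀ n : ℕ, |a * n| ≤ C) : a = 0 := by
  by_contra ha
  obtain ⟨n, hn⟩ := exists_nat_gt (C / |a|)
  have := h n
  rw [abs_mul, Nat.abs_cast, div_lt_iff₀ (abs_pos.mpr ha)] at *
  linarith

theorem sub_le_one_of_forall_int_le_or_le {α : Type*} {d : α → ℝ}
    (h : ∀ l : ℤ, (∀ i, d i ≤ l) ∨ ∀ i, (l : ℝ) ≤ d i) (i j : α) : d i - d j ≤ 1 := by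
  by_contra! hij
  have hlo := Int.lt_floor_add_one (d j)
  have hhi := Int.floor_le (d j)
  rcases h (⌊d j⌋ + 1) with hle | hge
  · have := hle i; push_cast at this; linarith
  · have := hge j; push_cast at this; linarith

theorem abs_sub_le_one_of_forall_int_le_or_le {α : Type*} {d : α → ℝ}
    (h : ∀ l : ℤ, (∀ i, d i ≤ l) ∨ ∀ i, (l : ℝ) ≤ d i) (i j : α) : |d i - d j| ≤ 1 :=
  abs_sub_le_iff.mpr
    ⟨sub_le_one_of_forall_int_le_or_le h i j, sub_le_one_of_forall_int_le_or_le h j i⟩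

def IsQuasimorphism {M : Type*} [Add M] (b : M → ℝ) (D : ℝ) : Prop :=
  ∀ m n, |b (m + n) - b m - b n| ≤ D

namespace IsQuasimorphism

theorem exists_abs_sub_mul_le_nat {b : ℕ → ℝ} {D : ℝ} (hb : IsQuasimorphism b D)
    (hb0 : b 0 = 0) : ∃ ω : ℝ, ∀ n : ℕ, |b n - ω * n| ≤ D := by
  have hu : Subadditive (fun n => b n + D) := fun m n => by linarith [(abs_le.mp (hb m n)).2]
  have hv : Subadditive (fun n => -b n + D) := fun m n => by linarith [(abs_le.mp (hb m n)).1]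
  have hmul : ∀ m n : ℕ, n * (b m - D) ≤ b (n * m) ∧ b (n * m) ≤ n * (b m + D) := by
    intro m n
    have h₁ := hu.apply_mul_add_le n m 0
    have h₂ := hv.apply_mul_add_le n m 0
    simp only [add_zero, hb0] at h₁ h₂
    constructor <;> linarith
  have hcross : ∀ m n : ℕ, (b (m + 1) - D) / (m + 1) ≤ (b (n + 1) + D) / (n + 1) := by
    intro m n
    have h₁ := (hmul (m + 1) (n + 1)).1
    have h₂ := (hmul (n + 1) (m + 1)).2
    rw [mul_comm] at h₂
    rw [div_le_div_iff₀ (by positivity) (by positivity)]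
    push_cast at h₁ h₂
    linarith
  set ω := ⨆ m : ℕ, (b (m + 1) - D) / (m + 1)
  have hbdd : BddAbove (Set.range fun m : ℕ => (b (m + 1) - D) / (m + 1)) :=
    ⟨_, Set.forall_mem_range.mpr fun m => hcross m 0⟩
  refine ⟨ω, fun n => ?_⟩
  rcases n with _ | n
  · simpa [hb0] using hb 0 0
  have hlo : (b (n + 1) - D) / (n + 1) ≤ ω := le_ciSup hbdd n
  have hhi : ω ≤ (b (n + 1) + D) / (n + 1) := ciSup_le fun m => hcross m n
  rw [div_le_iff₀ (by positivity)] at hlo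
  rw [le_div_iff₀ (by positivity)] at hhi
  rw [abs_le]
  push_cast
  constructor <;> linarith

theorem exists_abs_sub_mul_le {b : ℤ → ℝ} {D : ℝ} (hb : IsQuasimorphism b D) (hb0 : b 0 = 0) :
    ∃ ω : ℝ, ∀ n : ℤ, |b n - ω * n| ≤ D := by
  have hpos : IsQuasimorphism (fun n : ℕ => b n) D := fun m n => by simpa using hb m n
  have hneg : IsQuasimorphism (fun n : ℕ => -b (-n)) D := fun m n => by
    rw [← abs_neg]
    convert hb (-m) (-n) using 2
    push_cast
    ring_nf
  obtain ⟨ω, hω⟩ := hpos.exists_abs_sub_mul_le_nat (by simpa using hb0)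
  obtain ⟨ω', hω'⟩ := hneg.exists_abs_sub_mul_le_nat (by simpa using hb0)
  have hsum : ∀ n : ℤ, |b n + b (-n)| ≤ D := fun n => by
    simpa [hb0, abs_sub_comm, ← sub_sub, add_comm] using hb n (-n)
  have hωω' : ω = ω' := sub_eq_zero.mp <|
    eq_zero_of_forall_abs_mul_natCast_le (C := 3 * D) fun n => by
      have h₁ := abs_le.mp (hω n)
      have h₂ := abs_le.mp (hω' n)
      have h₃ := abs_le.mp (hsum n)
      rw [abs_le]
      constructor <;> linarith
  subst hωω'
  refine ⟨ω, fun n => ?_⟩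
  obtain ⟨n, rfl | rfl⟩ := n.eq_nat_or_neg
  · exact hω n
  · rw [← abs_neg]
    convert hω' n using 2
    push_cast
    ring

end IsQuasimorphism

theorem hasRotNum_of_abs_sub_mul_le {x : ℤ → ℝ} {ω C : ℝ} (h : ∀ n, |x n - ω * n| ≤ C) :
    HasRotNum x ω := by
  have hnorm : Tendsto (fun n : ℤ => ‖(n : ℝ)‖) (atBot ⊔ atTop) atTop :=
    tendsto_norm_cobounded_atTop.comp tendsto_intCast_atBot_sup_atTop_cobounded
  have hlim : Tendsto (fun n : ℤ => x n / n) (atBot ⊔ atTop) (𝓝 ω) := by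
    rw [← tendsto_sub_nhds_zero_iff]
    refine squeeze_zero_norm' ?_ ((tendsto_const_nhds (x := C)).div_atTop hnorm)
    filter_upwards [hnorm.eventually_gt_atTop 0] with n hn
    have hn' : (n : ℝ) ≠ 0 := norm_pos_iff.mp hn
    rw [div_sub' hn', norm_div, mul_comm]
    exact div_le_div_of_nonneg_right (h n) (norm_nonneg _)
  exact ⟨hlim.mono_left le_sup_right, hlim.mono_left le_sup_left⟩

theorem abs_sub_sub_le_one_of_forall_le_tau_or_tau_le {x y : ℤ → ℝ}
    (h : ∀ l : ℤ, x ≤ tau 0 l y ∨ tau 0 l y ≤ x) (i : ℤ) : |x i - y i - (x 0 - y 0)| ≤ 1 := by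
  have hcmp : ∀ l : ℤ, (∀ i, x i - y i ≤ l) ∨ ∀ i, (l : ℝ) ≤ x i - y i := fun l => by
    rcases h l with h | h
    · exact .inl fun i => by have := h i; simp only [tau, sub_zero] at this; linarith
    · exact .inr fun i => by have := h i; simp only [tau, sub_zero] at this; linarith
  exact abs_sub_le_one_of_forall_int_le_or_le hcmp i 0

namespace Birkhoff

variable {x : ℤ → ℝ}

theorem abs_sub_sub_le_one (hx : Birkhoff x) (i k : ℤ) :
    |x (i + k) - x i - (x k - x 0)| ≤ 1 := by
  have hcmp : ∀ l : ℤ, (∀ i, x (i + k) - x i ≤ l) ∨ ∀ i, (l : ℝ) ≤ x (i + k) - x i := by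
    intro l
    rcases hx 0 0 (-k) (-l) with h | h
    · refine .inr fun i => ?_
      have := h i
      simp only [tau, sub_zero, sub_neg_eq_add, Int.cast_neg, Int.cast_zero] at this
      linarith
    · refine .inl fun i => ?_
      have := h i
      simp only [tau, sub_zero, sub_neg_eq_add, Int.cast_neg, Int.cast_zero] at this
      linarith
  simpa only [zero_add] using abs_sub_le_one_of_forall_int_le_or_le hcmp i 0

theorem isQuasimorphism_sub_apply_zero (hx : Birkhoff x) :
    IsQuasimorphism (fun i => x i - x 0) 1 := fun m n => by
  convert hx.abs_sub_sub_le_one m n using 2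
  ring

theorem exists_abs_sub_mul_le_one (hx : Birkhoff x) :
    ∃ ω : ℝ, ∀ i : ℤ, |x i - x 0 - ω * i| ≤ 1 :=
  hx.isQuasimorphism_sub_apply_zero.exists_abs_sub_mul_le (sub_self _)

end Birkhoff

/-- A nonempty, totally ordered, shift-invariant collection of sequences has a
common rotation number `ω`, and every element satisfies `|x i - x 0 - ω i| ≤ 1`. -/
theorem rotation_number_of_ordered_shift_invariant_family
    (Γ : Set (ℤ → ℝ)) (hne : Γ.Nonempty)
    (htot : ∀ x ∈ Γ, ∀ y ∈ Γ, x ≤ y ∨ y ≤ x)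
    (hshift : ∀ x ∈ Γ, ∀ k l : ℤ, tau k l x ∈ Γ) :
    ∃ ω : ℝ, ∀ x ∈ Γ, HasRotNum x ω ∧ ∀ i : ℤ, |x i - x 0 - ω * (i : ℝ)| ≤ 1 := by
  have hbirkhoff : ∀ x ∈ Γ, Birkhoff x := fun x hx k l k' l' =>
    htot _ (hshift x hx k l) _ (hshift x hx k' l')
  obtain ⟨y, hy⟩ := hne
  obtain ⟨ω, hω⟩ := (hbirkhoff y hy).exists_abs_sub_mul_le_one
  refine ⟨ω, fun x hx => ?_⟩
  obtain ⟨ωx, hωx⟩ := (hbirkhoff x hx).exists_abs_sub_mul_le_one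
  have hxy := abs_sub_sub_le_one_of_forall_le_tau_or_tau_le fun l =>
    htot x hx _ (hshift y hy 0 l)
  have hωx_eq : ωx = ω := sub_eq_zero.mp <|
    eq_zero_of_forall_abs_mul_natCast_le (C := 3) fun n => by
      have h₁ := abs_le.mp (hωx n)
      have h₂ := abs_le.mp (hω n)
      have h₃ := abs_le.mp (hxy n)
      simp only [Int.cast_natCast] at h₁ h₂
      rw [abs_le]
      constructor <;> linarith
  subst hωx_eq
  refine ⟨hasRotNum_of_abs_sub_mul_le (C := 1 + |x 0|) fun n => ?_, hωx⟩
  calc |x n - ωx * n| = |(x n - x 0 - ωx * n) + x 0| := by ring_nf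
    _ ≤ |x n - x 0 - ωx * n| + |x 0| := abs_add_le _ _
    _ ≤ 1 + |x 0| := by gcongr; exact hωx n
end

section
/- Let x^n be a sequence of Birkhoff sequences, where x^n has rotation number ω_n, and suppose x^n converges pointwise to a sequence x^∞ ∈ ℝ^ℤ. Then x^∞ is a Birkhoff sequence, the limit ω := lim_{n→∞} ω_n exists, and x^∞ has rotation number ω. In particular the set of Birkhoff sequences is closed under pointwise convergence and the rotation number map on Birkhoff sequences is continuous for the topology of pointwise convergence. -/
open Filter Topology

/-!
If an increment `x (i + k) - x i` of a Birkhoff sequence exceeded another one `x (j + k) - x j`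
by more than `1`, an integer `m` strictly between them would make `τ_{-k,-m} x` and `x`
incomparable. Hence all increments of step `k` agree up to `1`, and telescoping along multiples
of `k` gives `|x k - x 0 - k ω| ≤ 1` when `x` has rotation number `ω`. This bound is uniform in
`x`, so it survives pointwise limits: it makes `ω_n` a Cauchy sequence and forces the limit
sequence to have rotation number `lim ω_n`. Being Birkhoff is a closed condition because every
`τ_{k,l}` is continuous for the product topology.
-/

lemma continuous_tau (k l : ℤ) : Continuous (tau k l) := by
  unfold tau; fun_prop

lemma isClosed_setOf_birkhoff : IsClosed {x : ℤ → ℝ | Birkhoff x} := by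
  simp only [Birkhoff, Set.ofPred_forall, Set.ofPred_or]
  exact isClosed_iInter fun k => isClosed_iInter fun l => isClosed_iInter fun k' =>
    isClosed_iInter fun l' =>
      (isClosed_le (continuous_tau k l) (continuous_tau k' l')).union
        (isClosed_le (continuous_tau k' l') (continuous_tau k l))

lemma hasRotNum_iff_tendsto_cofinite {x : ℤ → ℝ} {ω : ℝ} :
    HasRotNum x ω ↔ Tendsto (fun n : ℤ => x n / n) cofinite (𝓝 ω) := by
  rw [Int.cofinite_eq, tendsto_sup, HasRotNum, and_comm]

lemma hasRotNum_of_abs_sub_sub_mul_le {y : ℤ → ℝ} {c w C : ℝ}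
    (h : ∀ k : ℤ, |y k - c - k * w| ≤ C) : HasRotNum y w := by
  rw [hasRotNum_iff_tendsto_cofinite, ← tendsto_sub_nhds_zero_iff]
  have habs : Tendsto (fun k : ℤ => |(k : ℝ)|) cofinite atTop :=
    tendsto_norm_cocompact_atTop.comp Int.tendsto_coe_cofinite
  refine squeeze_zero_norm' ?_ (tendsto_const_nhds (x := C + |c|) |>.div_atTop habs)
  filter_upwards [eventually_cofinite_ne 0] with k hk
  have hk' : (k : ℝ) ≠ 0 := Int.cast_ne_zero.mpr hk
  have hsplit : y k / k - w = (y k - c - k * w + c) / k := by field_simp; ring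
  rw [Real.norm_eq_abs, hsplit, abs_div]
  gcongr
  exact (abs_add_le _ _).trans (by linarith [h k])

namespace Birkhoff

variable {x : ℤ → ℝ}

lemma sub_le_sub_add_one (hB : Birkhoff x) (k i j : ℤ) :
    x (i + k) - x i ≤ x (j + k) - x j + 1 := by
  by_contra! hgap
  set m : ℤ := ⌊x (j + k) - x j⌋ + 1
  have hm₁ : x (j + k) - x j < m := by push_cast [m]; exact Int.lt_floor_add_one _
  have hm₂ : (m : ℝ) < x (i + k) - x i := by
    push_cast [m]; linarith [Int.floor_le (x (j + k) - x j)]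
  rcases hB (-k) (-m) 0 0 with h | h
  · have hi := h i
    simp only [tau, sub_neg_eq_add, Int.cast_neg, sub_zero, Int.cast_zero, add_zero] at hi
    linarith
  · have hj := h j
    simp only [tau, sub_neg_eq_add, Int.cast_neg, sub_zero, Int.cast_zero, add_zero] at hj
    linarith

lemma abs_sub_sub_sub_le_one (hB : Birkhoff x) (k i j : ℤ) :
    |x (i + k) - x i - (x (j + k) - x j)| ≤ 1 :=
  abs_sub_le_iff.2 ⟨by linarith [hB.sub_le_sub_add_one k i j],
    by linarith [hB.sub_le_sub_add_one k j i]⟩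

lemma abs_sub_sub_nsmul_le (hB : Birkhoff x) (k : ℤ) (n : ℕ) :
    |x (n * k) - x 0 - n * (x k - x 0)| ≤ n := by
  induction n with
  | zero => simp
  | succ n ih =>
    have hstep := hB.abs_sub_sub_sub_le_one k (n * k) 0
    rw [zero_add] at hstep
    push_cast
    rw [add_mul, one_mul]
    calc |x (n * k + k) - x 0 - (n + 1) * (x k - x 0)|
        = |(x (n * k) - x 0 - n * (x k - x 0)) + (x (n * k + k) - x (n * k) - (x k - x 0))| := by
          ring_nf
      _ ≤ n + 1 := (abs_add_le _ _).trans (add_le_add ih hstep)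

lemma abs_sub_sub_mul_le_one (hB : Birkhoff x) {ω : ℝ} (hω : HasRotNum x ω) (k : ℤ) :
    |x k - x 0 - k * ω| ≤ 1 := by
  rcases eq_or_ne k 0 with rfl | hk
  · simp
  have hnk : Tendsto (fun n : ℕ => (n : ℤ) * k) atTop cofinite := by
    rw [← Nat.cofinite_eq_atTop]
    exact ((mul_left_injective₀ hk).comp Nat.cast_injective).tendsto_cofinite
  have hlim : Tendsto (fun n : ℕ => (x (n * k) - x 0) / n - (x k - x 0)) atTop
      (𝓝 (k * ω - 0 - (x k - x 0))) := by
    refine (((((hasRotNum_iff_tendsto_cofinite.1 hω).comp hnk).const_mul (k : ℝ)).sub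
      (tendsto_const_div_atTop_nhds_zero_nat (x 0))).sub_const _).congr' ?_
    filter_upwards [eventually_ne_atTop 0] with n hn
    have hk' : (k : ℝ) ≠ 0 := Int.cast_ne_zero.mpr hk
    simp only [Function.comp_apply]
    push_cast
    field_simp
  rw [sub_zero] at hlim
  rw [abs_sub_comm]
  refine le_of_tendsto hlim.abs ?_
  filter_upwards [eventually_ne_atTop 0] with n hn
  have hn' : (0 : ℝ) < n := by positivity
  rw [div_sub' hn'.ne', abs_div, abs_of_pos hn', div_le_one hn']
  exact hB.abs_sub_sub_nsmul_le k n

end Birkhoff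

lemma cauchySeq_of_forall_dist_le {α : Type*} [PseudoMetricSpace α] {u : ℕ → α}
    (h : ∀ ε > 0, ∃ v : ℕ → α, CauchySeq v ∧ ∀ n, dist (u n) (v n) ≤ ε) : CauchySeq u := by
  refine Metric.cauchySeq_iff'.2 fun ε hε => ?_
  obtain ⟨v, hv, huv⟩ := h (ε / 3) (by positivity)
  obtain ⟨N, hN⟩ := Metric.cauchySeq_iff'.1 hv (ε / 3) (by positivity)
  refine ⟨N, fun n hn => ?_⟩
  have := dist_triangle4 (u n) (v n) (v N) (u N)
  linarith [huv n, hN n hn, dist_comm (v N) (u N) ▸ huv N]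

lemma cauchySeq_rotNum_of_tendsto {x : ℕ → ℤ → ℝ} {ω : ℕ → ℝ} {xinf : ℤ → ℝ}
    (hB : ∀ n, Birkhoff (x n)) (hω : ∀ n, HasRotNum (x n) (ω n))
    (hlim : ∀ i, Tendsto (fun n => x n i) atTop (𝓝 (xinf i))) : CauchySeq ω := by
  refine cauchySeq_of_forall_dist_le fun ε hε => ?_
  obtain ⟨m, hm⟩ := exists_nat_one_div_lt hε
  set K : ℤ := m + 1
  have hK : (0 : ℝ) < K := by positivity
  refine ⟨fun n => (x n K - x n 0) / K, (((hlim K).sub (hlim 0)).div_const _).cauchySeq,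
    fun n => ?_⟩
  rw [Real.dist_eq, sub_div' hK.ne', abs_div, abs_of_pos hK, abs_sub_comm, mul_comm]
  calc |x n K - x n 0 - K * ω n| / K ≤ 1 / K := by
        gcongr; exact (hB n).abs_sub_sub_mul_le_one (hω n) K
    _ ≤ ε := by simpa [K] using hm.le

/-- Pointwise limits of Birkhoff sequences are Birkhoff, the rotation numbers
converge, and the limit sequence has the limiting rotation number. -/
theorem birkhoff_closed_and_rotation_number_continuous
    (x : ℕ → ℤ → ℝ) (ω : ℕ → ℝ) (xinf : ℤ → ℝ)
    (hB : ∀ n, Birkhoff (x n)) (hω : ∀ n, HasRotNum (x n) (ω n))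
    (hlim : ∀ i : ℤ, Filter.Tendsto (fun n => x n i) Filter.atTop (𝓝 (xinf i))) :
    Birkhoff xinf ∧
    ∃ w : ℝ, Filter.Tendsto ω Filter.atTop (𝓝 w) ∧ HasRotNum xinf w := by
  obtain ⟨w, hw⟩ := cauchySeq_tendsto_of_complete (cauchySeq_rotNum_of_tendsto hB hω hlim)
  refine ⟨isClosed_setOf_birkhoff.mem_of_tendsto (tendsto_pi_nhds.2 hlim) (.of_forall hB),
    w, hw, hasRotNum_of_abs_sub_sub_mul_le (c := xinf 0) (C := 1) fun k => ?_⟩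
  exact le_of_tendsto' (((hlim k).sub (hlim 0)).sub (hw.const_mul _)).abs
    fun n => (hB n).abs_sub_sub_mul_le_one (hω n) k
end

section
/- Let ω ∈ ℝ and let x be a Birkhoff sequence of rotation number ω. For integers k,l: if −ω·k + l > 0 then τ_{k,l}x ≥ x and τ_{k,l}x ≠ x, and if −ω·k + l < 0 then τ_{k,l}x ≤ x and τ_{k,l}x ≠ x. -/
open Filter Topology

/-! If `τ_{k,l} x ≤ x` then iterating gives `x 0 + n l ≤ x (n k)`; dividing by `n` and letting
`n → ∞`, the rotation number yields `l ≤ ω k`. Symmetrically `x ≤ τ_{k,l} x` forces `ω k ≤ l`.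
Since a Birkhoff sequence is comparable with each of its translates, the sign of `-ω k + l`
decides the direction of the comparison, and it rules out equality. -/

section Shift

variable {x : ℤ → ℝ}

@[simp]
lemma tau_zero_zero (x : ℤ → ℝ) : tau 0 0 x = x := by
  funext i; simp [tau]

lemma tau_tau (k l k' l' : ℤ) (x : ℤ → ℝ) : tau k l (tau k' l' x) = tau (k + k') (l + l') x := by
  funext i; simp only [tau]; push_cast; ring_nf

lemma tau_mono (k l : ℤ) : Monotone (tau k l) := fun _ _ h i => by
  simp only [tau]; linarith [h (i - k)]

lemma tau_mul_le_self {k l : ℤ} (h : tau k l x ≤ x) (n : ℕ) : tau (n * k) (n * l) x ≤ x := by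
  induction n with
  | zero => simp
  | succ n ih =>
    calc tau ((n + 1 : ℕ) * k) ((n + 1 : ℕ) * l) x = tau k l (tau (n * k) (n * l) x) := by
          rw [tau_tau]; push_cast; ring_nf
      _ ≤ tau k l x := tau_mono k l ih
      _ ≤ x := h

lemma self_le_tau_iff {k l : ℤ} : x ≤ tau k l x ↔ tau (-k) (-l) x ≤ x := by
  constructor
  · intro h
    simpa [tau_tau] using tau_mono (-k) (-l) h
  · intro h
    simpa [tau_tau] using tau_mono k l h

end Shift

lemma HasRotNum.tendsto_apply_mul_div {x : ℤ → ℝ} {ω : ℝ} (hrot : HasRotNum x ω) (k : ℤ) :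
    Tendsto (fun n : ℕ => x (n * k) / n) atTop (𝓝 (ω * k)) := by
  rcases eq_or_ne k 0 with rfl | hk
  · simpa using tendsto_const_div_atTop_nhds_zero_nat (x 0)
  -- `n ↦ n k` is injective, hence tends to `cofinite` whatever the sign of `k`.
  have hcofinite : Tendsto (fun n : ℤ => x n / n) cofinite (𝓝 ω) := by
    rw [Int.cofinite_eq]; exact hrot.2.sup hrot.1
  have hinj : Function.Injective (fun n : ℕ => (n : ℤ) * k) := fun m n h => by
    simpa using mul_right_cancel₀ hk h
  have hmul := (hcofinite.comp (Nat.cofinite_eq_atTop ▸ hinj.tendsto_cofinite)).mul_const (k : ℝ)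
  refine hmul.congr' ?_
  filter_upwards [eventually_ne_atTop 0] with n hn
  have : (k : ℝ) ≠ 0 := by exact_mod_cast hk
  simp only [Function.comp_apply]; push_cast
  field_simp

section RotationNumber

variable {ω : ℝ} {x : ℤ → ℝ} {k l : ℤ}

lemma HasRotNum.le_mul_of_tau_le_self (hrot : HasRotNum x ω) (h : tau k l x ≤ x) :
    (l : ℝ) ≤ ω * k := by
  have hlow : Tendsto (fun n : ℕ => x 0 / n + l) atTop (𝓝 (l : ℝ)) := by
    simpa using (tendsto_const_div_atTop_nhds_zero_nat (x 0)).add_const (l : ℝ)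
  refine le_of_tendsto_of_tendsto hlow (hrot.tendsto_apply_mul_div k) ?_
  filter_upwards [eventually_gt_atTop 0] with n hn
  have hstep : x 0 + n * l ≤ x (n * k) := by
    simpa [tau] using tau_mul_le_self h n (n * k)
  rw [div_add' _ _ _ (by positivity)]
  exact div_le_div_of_nonneg_right (by linarith) (by positivity)

lemma HasRotNum.mul_le_of_self_le_tau (hrot : HasRotNum x ω) (h : x ≤ tau k l x) :
    ω * k ≤ l := by
  have := hrot.le_mul_of_tau_le_self (self_le_tau_iff.mp h)
  push_cast at this
  linarith

end RotationNumber

/-- For a Birkhoff sequence `x` of rotation number `ω`: if `-ωk + l > 0` then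
`τ_{k,l} x ≥ x` and `τ_{k,l} x ≠ x`; if `-ωk + l < 0` then `τ_{k,l} x ≤ x` and
`τ_{k,l} x ≠ x`. -/
theorem birkhoff_ordering_from_rotation_number
    (ω : ℝ) (x : ℤ → ℝ) (hB : Birkhoff x) (hrot : HasRotNum x ω) (k l : ℤ) :
    (0 < -ω * (k : ℝ) + (l : ℝ) → x ≤ tau k l x ∧ tau k l x ≠ x) ∧
    (-ω * (k : ℝ) + (l : ℝ) < 0 → tau k l x ≤ x ∧ tau k l x ≠ x) := by
  have hcmp : tau k l x ≤ x ∨ x ≤ tau k l x := by simpa using hB k l 0 0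
  refine ⟨fun hpos => ⟨hcmp.resolve_left fun h => ?_, fun heq => ?_⟩,
    fun hneg => ⟨hcmp.resolve_right fun h => ?_, fun heq => ?_⟩⟩
  · linarith [hrot.le_mul_of_tau_le_self h]
  · linarith [hrot.le_mul_of_tau_le_self heq.le]
  · linarith [hrot.mul_le_of_self_le_tau h]
  · linarith [hrot.mul_le_of_self_le_tau heq.ge]
end

section
/- Let (p,q) ∈ ℕ×ℤ be relatively prime with p ≥ 1, let y be a (p,q)-periodic Birkhoff sequence, and let r ≥ 1 and a ≥ 0 be integers. Let U_{p,q} := τ_{s,t} where s,t ∈ ℤ satisfy pt − qs = 1. Then there exists i_0 ∈ ℤ such that Σ_{j=i_0−r}^{i_0+r−1} |(U_{p,q}^a y)_j − y_j| ≤ 2r·a/p. -/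
open Filter Topology

/-! With `f := U^a y - y = τ_{as,at} y - y`, the `(p,q)`-periodicity of `y` makes `f`
`p`-periodic with period sum `a (pt - qs) = a`. Being Birkhoff, `y` is comparable with its
translate, so `f` has constant sign and `|f|` also sums to `a` over a period. Summing the
`2r`-term window sums of `|f|` over the `p` window positions in a period counts each period sum
`2r` times, so some window sum is at most `2ra/p`. -/

open Finset

theorem tau_iterate (k l : ℤ) (n : ℕ) (x : ℤ → ℝ) :
    (tau k l)^[n] x = tau (n * k) (n * l) x := by
  induction n with
  | zero => funext i; simp [tau]
  | succ n ih =>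
    rw [Function.iterate_succ_apply', ih]
    funext i
    simp only [tau]
    push_cast
    ring_nf

theorem apply_add_of_tau_eq_self {k l : ℤ} {x : ℤ → ℝ} (h : tau k l x = x) (i : ℤ) :
    x (i + k) = x i + l := by
  simpa [tau] using (congrFun h (i + k)).symm

theorem sum_range_add_of_apply_add {G : Type*} [AddCommGroup G] {y : ℤ → G} {p : ℕ} {c : G}
    (h : ∀ i, y (i + p) = y i + c) (m : ℤ) :
    ∑ j ∈ range p, y (j + m) = ∑ j ∈ range p, y j + m • c := by
  have step (m : ℤ) : ∑ j ∈ range p, y (j + (m + 1)) = ∑ j ∈ range p, y (j + m) + c := by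
    have h₁ := sum_range_succ (fun j : ℕ => y (j + m)) p
    rw [sum_range_succ', add_comm (p : ℤ), h] at h₁
    simp only [Nat.cast_add, Nat.cast_one, Nat.cast_zero, zero_add,
      add_right_comm _ (1 : ℤ)] at h₁
    rw [add_comm (y m), ← add_assoc, add_left_inj] at h₁
    simpa only [add_assoc, add_comm (1 : ℤ) m] using h₁
  induction m using Int.induction_on with
  | zero => simp
  | succ m ih => rw [step, ih, add_smul, one_smul, add_assoc]
  | pred m ih =>
    have := step (-(m : ℤ) - 1)
    rw [sub_add_cancel, ih] at this
    rw [sub_smul, one_smul, ← add_sub_assoc, eq_sub_iff_add_eq, this]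

theorem Function.Periodic.sum_range_add {G : Type*} [AddCommGroup G] {g : ℤ → G} {p : ℕ}
    (hg : Function.Periodic g p) (m : ℤ) :
    ∑ j ∈ range p, g (j + m) = ∑ j ∈ range p, g j := by
  simpa using sum_range_add_of_apply_add (c := (0 : G)) (by simpa using hg) m

theorem Function.Periodic.sum_range_sum_add {G : Type*} [AddCommGroup G] {g : ℤ → G} {p : ℕ}
    (hg : Function.Periodic g p) (K : Finset ℤ) :
    ∑ i ∈ range p, ∑ k ∈ K, g (i + k) = #K • ∑ j ∈ range p, g j := by
  rw [sum_comm]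
  simp only [hg.sum_range_add, sum_const]

theorem Function.Periodic.exists_sum_add_le {g : ℤ → ℝ} {p : ℕ} (hg : Function.Periodic g p)
    (hp : 0 < p) (K : Finset ℤ) :
    ∃ i : ℤ, ∑ k ∈ K, g (i + k) ≤ #K * (∑ j ∈ range p, g j) / p := by
  obtain ⟨i, -, hi⟩ := exists_le_of_sum_le (nonempty_range_iff.mpr hp.ne')
    (g := fun _ => #K * (∑ j ∈ range p, g j) / p) <| by
      rw [hg.sum_range_sum_add, sum_const, card_range, nsmul_eq_mul, nsmul_eq_mul]
      field_simp
      exact le_rfl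
  exact ⟨i, hi⟩

theorem periodic_tau_sub {p : ℕ} {q : ℤ} {y : ℤ → ℝ} (hy : tau p q y = y) (k l : ℤ) :
    Function.Periodic (fun j => tau k l y j - y j) p := by
  intro j
  simp only [tau, add_sub_right_comm j (p : ℤ) k, apply_add_of_tau_eq_self hy]
  ring

theorem sum_range_tau_sub {p : ℕ} {q : ℤ} {y : ℤ → ℝ} (hy : tau p q y = y) (k l : ℤ) :
    ∑ j ∈ range p, (tau k l y j - y j) = p * l - k * q := by
  simp only [tau, sub_eq_add_neg _ k, sum_sub_distrib, sum_add_distrib,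
    sum_range_add_of_apply_add (apply_add_of_tau_eq_self hy), sum_const, card_range,
    nsmul_eq_mul, zsmul_eq_mul]
  push_cast
  ring

theorem Birkhoff.sum_abs_tau_sub {ι : Type*} {y : ℤ → ℝ} (hy : Birkhoff y) (k l : ℤ)
    (s : Finset ι) (e : ι → ℤ) :
    ∑ i ∈ s, |tau k l y (e i) - y (e i)| = |∑ i ∈ s, (tau k l y (e i) - y (e i))| := by
  have htau : tau 0 0 y = y := by funext i; simp [tau]
  rcases hy k l 0 0 with h | h <;> rw [htau] at h
  · rw [← abs_neg, ← sum_neg_distrib, abs_sum_of_nonneg fun j _ => by linarith [h (e j)]]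
    exact sum_congr rfl fun j _ => abs_of_nonpos (by linarith [h (e j)])
  · rw [abs_sum_of_nonneg fun j _ => by linarith [h (e j)]]
    exact sum_congr rfl fun j _ => abs_of_nonneg (by linarith [h (e j)])

theorem pigeonhole_translate_estimate_general
    (p : ℕ) (hp : 1 ≤ p) (q s t : ℤ) (hst : (p : ℤ) * t - q * s = 1)
    (y : ℤ → ℝ) (hyB : Birkhoff y) (hyper : tau (p : ℤ) q y = y)
    (r : ℕ) (a : ℕ) :
    ∃ i0 : ℤ, ∑ j ∈ Finset.Icc (i0 - (r : ℤ)) (i0 + (r : ℤ) - 1),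
        |(tau s t)^[a] y j - y j| ≤ 2 * (r : ℝ) * (a : ℝ) / (p : ℝ) := by
  set f : ℤ → ℝ := fun j => |tau (a * s) (a * t) y j - y j| with hf
  have hf_per : Function.Periodic f p := fun j => by
    simp only [hf, periodic_tau_sub hyper _ _ j]
  have hf_sum : ∑ j ∈ range p, f j = a := by
    have hst' : (p : ℝ) * t - q * s = 1 := by exact_mod_cast hst
    simp only [hf]
    rw [hyB.sum_abs_tau_sub, sum_range_tau_sub hyper]
    push_cast
    rw [show (p : ℝ) * (a * t) - a * s * q = a * (p * t - q * s) by ring, hst', mul_one,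
      abs_of_nonneg a.cast_nonneg]
  obtain ⟨i0, hi0⟩ := hf_per.exists_sum_add_le hp (Icc (-(r : ℤ)) (r - 1))
  have hcard : #(Icc (-(r : ℤ)) (r - 1)) = 2 * r := by rw [Int.card_Icc]; omega
  have hwindow :
      ∑ j ∈ Icc (i0 - r) (i0 + r - 1), f j = ∑ k ∈ Icc (-(r : ℤ)) (r - 1), f (i0 + k) := by
    rw [sub_eq_add_neg, add_sub_assoc, ← map_add_left_Icc, sum_map]
    rfl
  refine ⟨i0, ?_⟩
  rw [tau_iterate]
  simpa only [← hf, hwindow, hcard, hf_sum, Nat.cast_mul, Nat.cast_ofNat, mul_div_assoc] using hi0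

/-- For a `(p,q)`-periodic Birkhoff sequence `y` (with `p,q` relatively prime,
witnessed by `pt - qs = 1` and `U_{p,q} = τ_{s,t}`), and integers `r ≥ 1`, `a ≥ 0`, there is
an `i₀` with `∑_{j=i₀-r}^{i₀+r-1} |(U_{p,q}^a y)_j - y_j| ≤ 2ra/p`. -/
theorem pigeonhole_translate_estimate
    (p : ℕ) (hp : 1 ≤ p) (q s t : ℤ) (hst : (p : ℤ) * t - q * s = 1)
    (y : ℤ → ℝ) (hyB : Birkhoff y) (hyper : tau (p : ℤ) q y = y)
    (r : ℕ) (hr : 1 ≤ r) (a : ℕ) :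
    ∃ i0 : ℤ, ∑ j ∈ Finset.Icc (i0 - (r : ℤ)) (i0 + (r : ℤ) - 1),
        |(tau s t)^[a] y j - y j| ≤ 2 * (r : ℝ) * (a : ℝ) / (p : ℝ) :=
  pigeonhole_translate_estimate_general p hp q s t hst y hyB hyper r a
end

section
/- (Near-periodicity theorem.) Let p ∈ ℕ with p ≥ 1 and q ∈ ℤ be relatively prime, let ω ∈ ℝ, let r ≥ 1 be an integer, let i_1 ≤ i_2 be integers, and set a := ⌈(i_2 − i_1)·|q − ω·p|⌉. If x is a maximally periodic Birkhoff sequence of rotation number ω, then there exists i_0 ∈ ℤ such that for all integers m, n with i_1 + r ≤ i_0 + m·p ≤ i_2 − r + 1 and i_1 + r ≤ i_0 + n·p ≤ i_2 − r + 1, one has Σ_{j=i_0−r}^{i_0+r−1} |x_{mp+j} − x_{np+j} − (m−n)q| ≤ 2r·a/p. -/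
open Filter Topology

/-! After replacing `x, q, ω` by their negatives we may assume `ω p ≤ q`. For a maximally periodic
Birkhoff sequence, `x (i + k) ≤ x i + l` as soon as `k ω ≤ l`, so the defects
`u i = q - (x (i + p) - x i)` are nonnegative, and by telescoping a sum of `V` consecutive
defects is at most `V q - p ⌊V ω⌋`. Taking `V ≡ q⁻¹ a (mod p)` makes this integer congruent to
`a` and smaller than `a + p`, hence at most `a`: every block of defects of length at most
`i₂ - i₁ - p + 1` sums to at most `a`. Summing the windows `[w - r, w + r)` over all admissible
centres `w` gives at most `2 r a`, so for some residue `c` mod `p` the windows centred in `c + p ℤ`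
sum to at most `2 r a / p`. With `i₀ = c`, the sum in the theorem is exactly the sum of the
defect windows centred at `c + s p` for `s` between `n` and `m`. -/

open Finset

theorem sum_Ico_int_sub {M : Type*} [AddCommGroup M] (f : ℤ → M) {m n : ℤ} (hmn : m ≤ n) :
    ∑ i ∈ Ico m n, (f (i + 1) - f i) = f n - f m := by
  induction n, hmn using Int.leInduction with
  | base => simp
  | succ n hmn ih =>
    rw [← sum_Ico_add_eq_sum_Ico_add_one hmn, ih]
    abel

theorem sum_Ico_sub_shift_comm {M : Type*} [AddCommGroup M] (f : ℤ → M) (d : ℤ) {k l : ℤ}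
    (hk : 0 ≤ k) (hl : 0 ≤ l) :
    ∑ i ∈ Ico d (d + k), (f (i + l) - f i) = ∑ i ∈ Ico d (d + l), (f (i + k) - f i) := by
  induction k, hk using Int.leInduction with
  | base => simp
  | succ k hk ih =>
    have hsplit : ∀ i, f (i + (k + 1)) - f i = (f (i + k) - f i) + (f (i + 1 + k) - f (i + k)) :=
      fun i => by rw [show i + (k + 1) = i + 1 + k by ring]; abel
    rw [← add_assoc, ← sum_Ico_add_eq_sum_Ico_add_one (by omega), ih,
      sum_congr rfl fun i _ => hsplit i, sum_add_distrib,
      sum_Ico_int_sub (fun i => f (i + k)) (by omega : d ≤ d + l), add_right_comm d l k]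

namespace HasRotNum

variable {x : ℤ → ℝ} {ω : ℝ}

theorem neg (h : HasRotNum x ω) : HasRotNum (-x) (-ω) :=
  ⟨h.1.neg.congr fun n => by simp [neg_div], h.2.neg.congr fun n => by simp [neg_div]⟩

theorem tendsto_apply_nat_mul_div (h : HasRotNum x ω) (k : ℤ) :
    Tendsto (fun n : ℕ => x (n * k) / n) atTop (𝓝 (k * ω)) := by
  rcases eq_or_ne k 0 with rfl | hk
  · simpa using tendsto_const_div_atTop_nhds_zero_nat (x 0)
  have hrat : Tendsto (fun n : ℕ => x (n * k) / ((n * k : ℤ) : ℝ)) atTop (𝓝 ω) := by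
    rcases hk.lt_or_gt with hk | hk
    · exact h.2.comp (tendsto_natCast_atTop_atTop.atTop_mul_const_of_neg' hk)
    · exact h.1.comp (tendsto_natCast_atTop_atTop.atTop_mul_const' hk)
  refine (hrat.mul_const (k : ℝ)).congr' ?_ |>.trans (by rw [mul_comm])
  filter_upwards [eventually_ne_atTop 0] with n hn
  have : (k : ℝ) ≠ 0 := by exact_mod_cast hk
  push_cast
  field_simp

theorem mul_le_of_forall_le (h : HasRotNum x ω) {k l : ℤ} (hkl : ∀ i, x (i + k) ≤ x i + l) :
    k * ω ≤ l := by
  have hiter : ∀ n : ℕ, x (n * k) ≤ x 0 + n * l := by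
    intro n
    induction n with
    | zero => simp
    | succ n ih =>
      have := hkl (n * k)
      push_cast
      rw [add_mul, one_mul]
      linarith
  have hbound : Tendsto (fun n : ℕ => x 0 / n + l) atTop (𝓝 (0 + l)) :=
    (tendsto_const_div_atTop_nhds_zero_nat _).add_const _
  refine le_of_tendsto_of_tendsto (h.tendsto_apply_nat_mul_div k) (by simpa using hbound) ?_
  filter_upwards [eventually_gt_atTop 0] with n hn
  rw [div_le_iff₀ (by positivity), add_mul, div_mul_cancel₀ _ (by positivity)]
  linarith [hiter n]

end HasRotNum

theorem MaxPeriodic.neg {x : ℤ → ℝ} {ω : ℝ} (h : MaxPeriodic ω x) : MaxPeriodic (-ω) (-x) := by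
  intro k l hkl
  funext i
  have := congrFun (h k (-l) (by push_cast; linarith)) i
  simp only [tau, Pi.neg_apply, Int.cast_neg] at this ⊢
  linarith

namespace Birkhoff

variable {x : ℤ → ℝ} {ω : ℝ}

theorem neg (hB : Birkhoff x) : Birkhoff (-x) := by
  intro k l k' l'
  refine (hB k' (-l') k (-l)).imp (fun h i => ?_) (fun h i => ?_) <;>
  · have := h i
    simp only [tau, Pi.neg_apply, Int.cast_neg] at this ⊢
    linarith

theorem forall_le_or_forall_ge (hB : Birkhoff x) (k l : ℤ) :
    (∀ i, x (i + k) ≤ x i + l) ∨ ∀ i, x i + l ≤ x (i + k) := by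
  refine (hB (-k) (-l) 0 0).imp (fun h i => ?_) (fun h i => ?_) <;>
  · have := h i
    simp only [tau, sub_neg_eq_add, sub_zero, Int.cast_neg, Int.cast_zero, add_zero] at this
    linarith

/-- Rotation number alone gives this when `k * ω < l`; the boundary case `k * ω = l` is where
maximal periodicity enters. -/
theorem apply_add_le_of_mul_le (hB : Birkhoff x) (hrot : HasRotNum x ω)
    (hmax : MaxPeriodic ω x) {k l : ℤ} (hkl : k * ω ≤ l) (i : ℤ) : x (i + k) ≤ x i + l := by
  rcases hB.forall_le_or_forall_ge k l with hle | hge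
  · exact hle i
  have hrev : -k * ω ≤ -l := by
    simpa using hrot.mul_le_of_forall_le (k := -k) (l := -l) fun j => by
      have := hge (j - k)
      simp only [sub_add_cancel, Int.cast_neg] at this ⊢
      rw [← sub_eq_add_neg]
      linarith
  have := congrFun (hmax k l (by linarith)) (i + k)
  simp only [tau, add_sub_cancel_right] at this
  linarith

theorem le_apply_add_of_le_mul (hB : Birkhoff x) (hrot : HasRotNum x ω)
    (hmax : MaxPeriodic ω x) {k l : ℤ} (hkl : l ≤ k * ω) (i : ℤ) : x i + l ≤ x (i + k) := by
  have := hB.apply_add_le_of_mul_le hrot hmax (k := -k) (l := -l) (by push_cast; linarith) (i + k)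
  simp only [add_neg_cancel_right, Int.cast_neg] at this
  linarith

theorem sum_Ico_sub_sub_le (hB : Birkhoff x) (hrot : HasRotNum x ω) (hmax : MaxPeriodic ω x)
    {p : ℤ} (hp : 0 ≤ p) (q d : ℤ) {V : ℤ} (hV : 0 ≤ V) :
    ∑ i ∈ Ico d (d + V), (q - (x (i + p) - x i)) ≤ ((V * q - p * ⌊(V : ℝ) * ω⌋ : ℤ) : ℝ) := by
  have hstep : ∀ i ∈ Ico d (d + p), (⌊(V : ℝ) * ω⌋ : ℝ) ≤ x (i + V) - x i := fun i _ => by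
    linarith [hB.le_apply_add_of_le_mul hrot hmax (Int.floor_le ((V : ℝ) * ω)) i]
  have hcard : ∀ n : ℤ, 0 ≤ n → ((#(Ico d (d + n)) : ℕ) : ℝ) = n := fun n hn => by
    rw [Int.card_Ico, add_sub_cancel_left]
    exact_mod_cast Int.toNat_of_nonneg hn
  have := card_nsmul_le_sum _ _ _ hstep
  rw [sum_sub_distrib, sum_const, sum_Ico_sub_shift_comm x d hV hp, nsmul_eq_mul, hcard V hV]
  rw [nsmul_eq_mul, hcard p hp] at this
  push_cast
  linarith

end Birkhoff

theorem exists_Ico_dvd_mul_sub {p q : ℤ} (hp : 0 < p) (hpq : IsCoprime p q) (a M : ℤ) :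
    ∃ V, M ≤ V ∧ V < M + p ∧ p ∣ V * q - a := by
  obtain ⟨u, v, huv⟩ := hpq
  refine ⟨M + (v * a - M) % p, by linarith [Int.emod_nonneg (v * a - M) hp.ne'],
    by linarith [Int.emod_lt_of_pos (v * a - M) hp], -((v * a - M) / p * q) - a * u, ?_⟩
  rw [Int.emod_def]
  linear_combination a * huv

theorem exists_mul_sub_mul_floor_le {p : ℕ} (hp : 0 < p) {q : ℤ} (hpq : IsCoprime (p : ℤ) q)
    {ω : ℝ} (hω : ω * p ≤ q) {M N : ℤ} (hMN : M + p ≤ N + 1) :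
    ∃ V, M ≤ V ∧ V ≤ N ∧ V * q - p * ⌊(V : ℝ) * ω⌋ ≤ ⌈(N : ℝ) * (q - ω * p)⌉ := by
  set a := ⌈(N : ℝ) * (q - ω * p)⌉
  obtain ⟨V, hMV, hVM, hdvd⟩ := exists_Ico_dvd_mul_sub (by exact_mod_cast hp) hpq a M
  have hVN : V ≤ N := by omega
  refine ⟨V, hMV, hVN, ?_⟩
  have hlt : V * q - p * ⌊(V : ℝ) * ω⌋ < a + p := by
    have hfl := Int.lt_floor_add_one ((V : ℝ) * ω)
    have hN : (V : ℝ) * (q - ω * p) ≤ N * (q - ω * p) :=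
      mul_le_mul_of_nonneg_right (by exact_mod_cast hVN) (by linarith)
    have hp' : (0 : ℝ) < p := by exact_mod_cast hp
    have : (V : ℝ) * q - p * ⌊(V : ℝ) * ω⌋ < a + p := by
      nlinarith [Int.le_ceil ((N : ℝ) * (q - ω * p))]
    exact_mod_cast this
  by_contra! hgt
  have := Int.le_of_dvd (by omega) (dvd_sub hdvd (dvd_mul_right _ ⌊(V : ℝ) * ω⌋))
  omega

theorem Birkhoff.sum_Ico_sub_sub_le_ceil {x : ℤ → ℝ} {ω : ℝ} (hB : Birkhoff x)
    (hrot : HasRotNum x ω) (hmax : MaxPeriodic ω x) {p : ℕ} (hp : 0 < p) {q : ℤ}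
    (hpq : IsCoprime (p : ℤ) q) (hω : ω * p ≤ q) {N : ℤ} (hN : 0 ≤ N) {d K : ℤ}
    (hdK : K - d + p ≤ N + 1) :
    ∑ i ∈ Ico d K, (q - (x (i + p) - x i)) ≤ ⌈(N : ℝ) * (q - ω * p)⌉ := by
  rcases le_or_gt K d with hKd | hdK_lt
  · rw [Ico_eq_empty_of_le hKd, sum_empty]
    exact_mod_cast Int.ceil_nonneg (mul_nonneg (by exact_mod_cast hN) (by linarith))
  obtain ⟨V, hV, -, hFa⟩ := exists_mul_sub_mul_floor_le hp hpq hω (M := K - d) hdK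
  have hnonneg : ∀ i, 0 ≤ (q : ℝ) - (x (i + p) - x i) := fun i => by
    have hpω : (p : ℤ) * ω ≤ q := by simpa [mul_comm] using hω
    linarith [hB.apply_add_le_of_mul_le hrot hmax hpω i]
  calc ∑ i ∈ Ico d K, (q - (x (i + p) - x i))
      ≤ ∑ i ∈ Ico d (d + V), (q - (x (i + p) - x i)) :=
        sum_le_sum_of_subset_of_nonneg (Ico_subset_Ico_right (by omega)) fun i _ _ => hnonneg i
    _ ≤ ((V * q - p * ⌊(V : ℝ) * ω⌋ : ℤ) : ℝ) :=
        hB.sum_Ico_sub_sub_le hrot hmax (by positivity) q d (by omega)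
    _ ≤ _ := by exact_mod_cast hFa

theorem sum_Ico_sum_Ico_add_le {u : ℤ → ℝ} {A : ℝ} (r : ℕ) {a b : ℤ}
    (h : ∀ k ∈ Ico (-(r : ℤ)) r, ∑ i ∈ Ico (a + k) (b + k), u i ≤ A) :
    ∑ w ∈ Ico a b, ∑ k ∈ Ico (-(r : ℤ)) r, u (w + k) ≤ 2 * r * A := by
  rw [sum_comm]
  calc ∑ k ∈ Ico (-(r : ℤ)) r, ∑ w ∈ Ico a b, u (w + k)
      ≤ ∑ k ∈ Ico (-(r : ℤ)) r, A := sum_le_sum fun k hk => by rw [sum_Ico_add']; exact h k hk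
    _ = 2 * r * A := by
        rw [sum_const, Int.card_Ico, sub_neg_eq_add, ← Nat.cast_add, Int.toNat_natCast,
          nsmul_eq_mul]
        push_cast
        ring

theorem exists_sum_progression_le {W : ℤ → ℝ} (hW : ∀ w, 0 ≤ W w) {p : ℕ} (hp : 0 < p)
    (a b : ℤ) :
    ∃ c : ℤ, ∀ n m : ℤ, a ≤ n * p + c → m * p + c < b + p →
      ∑ s ∈ Ico n m, W (s * p + c) ≤ (∑ w ∈ Ico a b, W w) / p := by
  obtain ⟨c, hc, hfiber⟩ := exists_sum_fiber_le_of_maps_to_of_sum_le_nsmul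
    (f := fun w => w % (p : ℤ)) (t := Ico 0 (p : ℤ)) (w := W)
    (b := (∑ w ∈ Ico a b, W w) / p)
    (fun w _ => mem_Ico.2 ⟨Int.emod_nonneg _ (by omega), Int.emod_lt_of_pos _ (by omega)⟩)
    ⟨0, by simp [hp]⟩ (by simp [field])
  rw [mem_Ico] at hc
  refine ⟨c, fun n m hn hm => le_trans ?_ hfiber⟩
  rw [← sum_image fun s _ s' _ h => by simpa [hp.ne'] using h]
  refine sum_le_sum_of_subset_of_nonneg (fun w hw => ?_) fun _ _ _ => hW _
  obtain ⟨s, hs, rfl⟩ := mem_image.1 hw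
  rw [mem_Ico] at hs
  have hns : n * (p : ℤ) ≤ s * p := by gcongr; exact hs.1
  have hsm : s * (p : ℤ) + p ≤ m * p := by nlinarith [hs.2]
  simp only [mem_filter, mem_Ico]
  refine ⟨⟨by omega, by omega⟩, ?_⟩
  rw [add_comm, Int.add_mul_emod_self_right, Int.emod_eq_of_lt hc.1 hc.2]

theorem abs_sub_sub_mul_eq_sum_Ico {x : ℤ → ℝ} {p q : ℤ} (hpq : ∀ i, x (i + p) ≤ x i + q)
    (j : ℤ) {n m : ℤ} (hnm : n ≤ m) :
    |x (m * p + j) - x (n * p + j) - (m - n) * q|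
      = ∑ s ∈ Ico n m, (q - (x (s * p + j + p) - x (s * p + j))) := by
  have htel := sum_Ico_int_sub (fun s : ℤ => x (s * p + j) - s * q) hnm
  have hterm : ∀ s : ℤ, (q - (x (s * p + j + p) - x (s * p + j)))
      = -(x ((s + 1) * p + j) - ((s + 1 : ℤ) : ℝ) * q - (x (s * p + j) - s * q)) := fun s => by
    rw [show (s + 1) * p + j = s * p + j + p by ring]
    push_cast
    ring
  have hsum : ∑ s ∈ Ico n m, (q - (x (s * p + j + p) - x (s * p + j)))
      = -(x (m * p + j) - x (n * p + j) - (m - n) * q) := by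
    rw [sum_congr rfl fun s _ => hterm s, sum_neg_distrib, htel]
    ring
  have hnonneg : 0 ≤ ∑ s ∈ Ico n m, (q - (x (s * p + j + p) - x (s * p + j))) :=
    sum_nonneg fun s _ => by linarith [hpq (s * p + j)]
  rw [hsum] at hnonneg ⊢
  exact abs_of_nonpos (by linarith)

theorem near_periodicity_of_mul_le
    (p : ℕ) (hp : 1 ≤ p) (q : ℤ) (hpq : IsCoprime (p : ℤ) q) (ω : ℝ)
    (r : ℕ) (i1 i2 : ℤ) (h12 : i1 ≤ i2)
    (x : ℤ → ℝ) (hB : Birkhoff x) (hrot : HasRotNum x ω) (hmax : MaxPeriodic ω x)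
    (hω : ω * p ≤ q) :
    ∃ i0 : ℤ, ∀ m n : ℤ,
      i1 + (r : ℤ) ≤ i0 + m * (p : ℤ) → i0 + m * (p : ℤ) ≤ i2 - (r : ℤ) + 1 →
      i1 + (r : ℤ) ≤ i0 + n * (p : ℤ) → i0 + n * (p : ℤ) ≤ i2 - (r : ℤ) + 1 →
      ∑ j ∈ Finset.Icc (i0 - (r : ℤ)) (i0 + (r : ℤ) - 1),
          |x (m * (p : ℤ) + j) - x (n * (p : ℤ) + j) - ((m : ℝ) - (n : ℝ)) * (q : ℝ)| ≤
        2 * (r : ℝ) * ((⌈((i2 : ℝ) - (i1 : ℝ)) * |(q : ℝ) - ω * (p : ℝ)|⌉ : ℤ) : ℝ) / (p : ℝ) := by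
  set a := ⌈((i2 : ℝ) - (i1 : ℝ)) * |(q : ℝ) - ω * (p : ℝ)|⌉
  set u : ℤ → ℝ := fun i => q - (x (i + p) - x i)
  have hu : ∀ i, x (i + p) ≤ x i + q :=
    hB.apply_add_le_of_mul_le hrot hmax (by rw [mul_comm]; exact_mod_cast hω)
  have ha : a = ⌈((i2 - i1 : ℤ) : ℝ) * (q - ω * p)⌉ := by
    simp only [a, abs_of_nonneg (sub_nonneg.2 hω), Int.cast_sub]
  have hblock : ∀ d K, K - d + p ≤ i2 - i1 + 1 → ∑ i ∈ Ico d K, u i ≤ a := fun d K h => by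
    rw [ha]
    exact hB.sum_Ico_sub_sub_le_ceil hrot hmax hp hpq hω (sub_nonneg.2 h12) h
  set W : ℤ → ℝ := fun w => ∑ k ∈ Ico (-(r : ℤ)) r, u (w + k)
  have hW : ∀ w, 0 ≤ W w := fun w => sum_nonneg fun k _ => by linarith [hu (w + k)]
  have hT : ∑ w ∈ Ico (i1 + r) (i2 - r + 2 - p), W w ≤ 2 * r * a :=
    sum_Ico_sum_Ico_add_le r fun k hk => hblock _ _ (by rw [mem_Ico] at hk; omega)
  obtain ⟨c, hc⟩ := exists_sum_progression_le hW hp (i1 + r) (i2 - r + 2 - p)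
  refine ⟨c, fun m n hm1 hm2 hn1 hn2 => ?_⟩
  wlog hnm : n ≤ m generalizing m n
  · refine le_of_eq_of_le (sum_congr rfl fun j _ => ?_) (this n m hn1 hn2 hm1 hm2 (by omega))
    rw [← abs_neg]
    congr 1
    ring
  calc ∑ j ∈ Icc (c - r) (c + r - 1), |x (m * p + j) - x (n * p + j) - (m - n) * q|
      = ∑ j ∈ Ico (c - r) (c + r), ∑ s ∈ Ico n m, u (s * p + j) := by
        rw [Icc_sub_one_right_eq_Ico]
        exact sum_congr rfl fun j _ => abs_sub_sub_mul_eq_sum_Ico hu j hnm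
    _ = ∑ s ∈ Ico n m, W (s * p + c) := by
        rw [sum_comm]
        refine sum_congr rfl fun s _ => ?_
        rw [show c - r = -r + c by ring, show c + r = r + c by ring, ← sum_Ico_add']
        exact sum_congr rfl fun k _ => by rw [add_right_comm, add_assoc]
    _ ≤ (∑ w ∈ Ico (i1 + r) (i2 - r + 2 - p), W w) / p := hc n m (by linarith) (by linarith)
    _ ≤ 2 * r * a / p := by gcongr

theorem near_periodicity_general
    (p : ℕ) (hp : 1 ≤ p) (q : ℤ) (hpq : IsCoprime (p : ℤ) q) (ω : ℝ)
    (r : ℕ) (i1 i2 : ℤ) (h12 : i1 ≤ i2)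
    (x : ℤ → ℝ) (hB : Birkhoff x) (hrot : HasRotNum x ω) (hmax : MaxPeriodic ω x) :
    ∃ i0 : ℤ, ∀ m n : ℤ,
      i1 + (r : ℤ) ≤ i0 + m * (p : ℤ) → i0 + m * (p : ℤ) ≤ i2 - (r : ℤ) + 1 →
      i1 + (r : ℤ) ≤ i0 + n * (p : ℤ) → i0 + n * (p : ℤ) ≤ i2 - (r : ℤ) + 1 →
      ∑ j ∈ Finset.Icc (i0 - (r : ℤ)) (i0 + (r : ℤ) - 1),
          |x (m * (p : ℤ) + j) - x (n * (p : ℤ) + j) - ((m : ℝ) - (n : ℝ)) * (q : ℝ)| ≤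
        2 * (r : ℝ) * ((⌈((i2 : ℝ) - (i1 : ℝ)) * |(q : ℝ) - ω * (p : ℝ)|⌉ : ℤ) : ℝ) / (p : ℝ) := by
  rcases le_total (ω * p) q with hω | hω
  · exact near_periodicity_of_mul_le p hp q hpq ω r i1 i2 h12 x hB hrot hmax hω
  obtain ⟨i0, h⟩ := near_periodicity_of_mul_le p hp (-q) hpq.neg_right (-ω) r i1 i2 h12 (-x)
    hB.neg hrot.neg hmax.neg (by push_cast; linarith)
  have hsummand : ∀ m n j : ℤ, |(-x) (m * p + j) - (-x) (n * p + j) - (m - n) * ((-q : ℤ) : ℝ)|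
      = |x (m * p + j) - x (n * p + j) - (m - n) * q| := fun m n j => by
    rw [← abs_neg]
    simp only [Pi.neg_apply, Int.cast_neg]
    congr 1
    ring
  have hslope : |((-q : ℤ) : ℝ) - -ω * p| = |(q : ℝ) - ω * p| := by
    rw [← abs_neg]
    push_cast
    congr 1
    ring
  exact ⟨i0, fun m n hm1 hm2 hn1 hn2 => by
    simpa only [hsummand, hslope] using h m n hm1 hm2 hn1 hn2⟩

/-- Near-periodicity theorem: for a maximally periodic Birkhoff sequence `x`
of rotation number `ω` and relatively prime `(p,q)`, there is `i₀` such that for all `m, n`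
with `i₁ + r ≤ i₀ + mp, i₀ + np ≤ i₂ - r + 1`,
`∑_{j=i₀-r}^{i₀+r-1} |x_{mp+j} - x_{np+j} - (m-n)q| ≤ 2ra/p` where
`a = ⌈(i₂-i₁)|q - ωp|⌉`. -/
theorem near_periodicity
    (p : ℕ) (hp : 1 ≤ p) (q : ℤ) (hpq : IsCoprime (p : ℤ) q) (ω : ℝ)
    (r : ℕ) (hr : 1 ≤ r) (i1 i2 : ℤ) (h12 : i1 ≤ i2)
    (x : ℤ → ℝ) (hB : Birkhoff x) (hrot : HasRotNum x ω) (hmax : MaxPeriodic ω x) :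
    ∃ i0 : ℤ, ∀ m n : ℤ,
      i1 + (r : ℤ) ≤ i0 + m * (p : ℤ) → i0 + m * (p : ℤ) ≤ i2 - (r : ℤ) + 1 →
      i1 + (r : ℤ) ≤ i0 + n * (p : ℤ) → i0 + n * (p : ℤ) ≤ i2 - (r : ℤ) + 1 →
      ∑ j ∈ Finset.Icc (i0 - (r : ℤ)) (i0 + (r : ℤ) - 1),
          |x (m * (p : ℤ) + j) - x (n * (p : ℤ) + j) - ((m : ℝ) - (n : ℝ)) * (q : ℝ)| ≤
        2 * (r : ℝ) * ((⌈((i2 : ℝ) - (i1 : ℝ)) * |(q : ℝ) - ω * (p : ℝ)|⌉ : ℤ) : ℝ) / (p : ℝ) :=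
  near_periodicity_general p hp q hpq ω r i1 i2 h12 x hB hrot hmax
end

section
/- Suppose p' ∈ ℕ, p ∈ ℕ, q ∈ ℤ with p,p' ≥ 1, and write p'·p = m·p̃ and p'·q + 1 = m·q̃ with p̃ ∈ ℕ, q̃ ∈ ℤ relatively prime and m ∈ ℕ, m ≥ 1. Then the least common multiple of p and p̃ equals p'·p. If moreover p' is characterized by 1/(p'·p) < ω − q/p < 1/((p'−1)·p) for some ω ∈ ℝ (with p' ≥ 2), then p' ≤ p̃ ≤ p'·p. -/
open Filter Topology

/-!
Since `p'q + 1 = m q̃`, every common divisor of `m` and `p'` divides `1`, so `m` is coprime to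
`p'`; as `m ∣ p'p`, it divides `p`. Writing `p = m s`, cancelling `m` in `p'p = m p̃` gives
`p̃ = p' s`, whence `lcm(p, p̃) = s · lcm(m, p') = s m p' = p'p`, and `p' ∣ p̃ ∣ p'p`.
-/

theorem Nat.coprime_of_mul_add_one_eq_mul {m n : ℕ} {a b : ℤ} (h : (n : ℤ) * a + 1 = m * b) :
    Nat.Coprime m n :=
  Nat.isCoprime_iff_coprime.mp ⟨b, -a, by linear_combination -h⟩

theorem Nat.Coprime.exists_eq_mul_of_mul_eq_mul {m n a b : ℕ} (hmn : Nat.Coprime m n)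
    (hm : m ≠ 0) (h : n * a = m * b) : ∃ s, a = m * s ∧ b = n * s := by
  obtain ⟨s, rfl⟩ : m ∣ a := hmn.dvd_of_dvd_mul_left ⟨b, h⟩
  refine ⟨s, rfl, Nat.eq_of_mul_eq_mul_left (Nat.pos_of_ne_zero hm) ?_⟩
  rw [← h]
  ring

theorem lcm_and_bounds_for_ptilde_general
    (p' p : ℕ) (q : ℤ)
    (m ptil : ℕ) (qtil : ℤ) (hm : 1 ≤ m) (hptil : 1 ≤ ptil)
    (hfac1 : p' * p = m * ptil) (hfac2 : (p' : ℤ) * q + 1 = (m : ℤ) * qtil) :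
    Nat.lcm p ptil = p' * p ∧
    (∀ ω : ℝ, 2 ≤ p' →
      1 / ((p' : ℝ) * (p : ℝ)) < ω - (q : ℝ) / (p : ℝ) →
      ω - (q : ℝ) / (p : ℝ) < 1 / (((p' : ℝ) - 1) * (p : ℝ)) →
      p' ≤ ptil ∧ ptil ≤ p' * p) := by
  have hcop : Nat.Coprime m p' := Nat.coprime_of_mul_add_one_eq_mul hfac2
  obtain ⟨s, rfl, rfl⟩ := hcop.exists_eq_mul_of_mul_eq_mul (by omega) hfac1
  refine ⟨?_, fun _ _ _ _ => ⟨Nat.le_of_dvd hptil (dvd_mul_right p' s), ?_⟩⟩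
  · rw [Nat.lcm_mul_right, hcop.lcm_eq_mul]
    ring
  · rw [hfac1]
    exact Nat.le_mul_of_pos_left _ hm

/-- write `p'p = m p̃` and `p'q + 1 = m q̃` with `p̃, q̃` relatively prime.
Then `lcm(p, p̃) = p'p`; and if moreover `1/(p'p) < ω - q/p < 1/((p'-1)p)` with `p' ≥ 2`,
then `p' ≤ p̃ ≤ p'p`. -/
theorem lcm_and_bounds_for_ptilde
    (p' p : ℕ) (q : ℤ) (hp : 1 ≤ p) (hp' : 1 ≤ p')
    (m ptil : ℕ) (qtil : ℤ) (hm : 1 ≤ m) (hptil : 1 ≤ ptil)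
    (hfac1 : p' * p = m * ptil) (hfac2 : (p' : ℤ) * q + 1 = (m : ℤ) * qtil)
    (hcop : IsCoprime (ptil : ℤ) qtil) :
    Nat.lcm p ptil = p' * p ∧
    (∀ ω : ℝ, 2 ≤ p' →
      1 / ((p' : ℝ) * (p : ℝ)) < ω - (q : ℝ) / (p : ℝ) →
      ω - (q : ℝ) / (p : ℝ) < 1 / (((p' : ℝ) - 1) * (p : ℝ)) →
      p' ≤ ptil ∧ ptil ≤ p' * p) :=
  lcm_and_bounds_for_ptilde_general p' p q m ptil qtil hm hptil hfac1 hfac2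
end
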